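/- arXiv:2208.11719 — 3 statements merged into one kernel-verified Lean document; each statement's English description precedes it below -/
import Mathlib

section
/- Let M be as above with a perfect G-invariant pairing ⟨-,-⟩ : M ⊗ M → R(-d), satisfying ⟨F x, F y⟩ = q^d · σ(⟨x, y⟩). Let χ_1, …, χ_r be a σ-orbit of characters appearing in M such that the set {χ_1, …, χ_r} is closed under inversion (for each i there is j with χ_i^{-1} = χ_j). Then the eigenvalue μ = ∏_{i=1}^r χ_i(a) of F^r on each eigenspace M(χ_i) satisfies μ² = q^{rd}. -/
/-- The isotypic projector `π_χ = (1/n) ∑_{h ∈ G} χ(h)⁻¹ [h]` in the group algebra `R[G]`. -/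
noncomputable def isotypicProj (R : Type*) [CommRing R] (G : Type*) [CommGroup G] [Fintype G]
    [Invertible ((Fintype.card G : R))] (χ : G →* Rˣ) : MonoidAlgebra R G :=
  ⅟(Fintype.card G : R) • ∑ h : G, MonoidAlgebra.single h (((χ h)⁻¹ : Rˣ) : R)

/-- Linear extension of a character: `χ(∑ a_h [h]) = ∑ a_h χ(h)`. -/
noncomputable def chiEval {R : Type*} [CommRing R] {G : Type*} [CommGroup G]
    (χ : G →* Rˣ) (a : MonoidAlgebra R G) : R :=
  a.coeff.sum fun h c => c * ((χ h : Rˣ) : R)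

/-- The action of the group algebra `R[G]` on an `R`-module induced by an action of `G`. -/
noncomputable def gAct (R : Type*) [CommRing R] (G : Type*) [CommGroup G]
    {M : Type*} [AddCommGroup M] [Module R M] (ρ : G →* Module.End R M) :
    MonoidAlgebra R G →ₐ[R] Module.End R M :=
  MonoidAlgebra.lift R (Module.End R M) G ρ

/-!
Write `m_χ = π_χ m`. Since `F m = a m` and `F π_χ = π_{χ ∘ σ⁻¹} F`, we get
`F m_{χ_i} = χ_{i+1}(a) m_{χ_{i+1}}`, so `F` permutes the lines `R m_{χ_i}` cyclically and `F^r`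
acts on each of them by `μ = ∏ χ_i(a)`. As `F^r` scales the pairing by `q^{rd}`, pairing
`m_{χ_i}` with `m_{χ_i⁻¹}`, which lies in the same orbit, gives `μ² ⟨m_χ, m_{χ⁻¹}⟩ = q^{rd} ⟨m_χ, m_{χ⁻¹}⟩`
with a nonzero pairing.
-/

section GroupAlgebra

variable {R : Type*} [CommRing R] {G : Type*} [CommGroup G]

theorem chiEval_single (χ : G →* Rˣ) (h : G) (c : R) :
    chiEval χ (MonoidAlgebra.single h c) = c * χ h := by
  unfold chiEval
  rw [MonoidAlgebra.coeff_single]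
  exact Finsupp.sum_single_index (by simp)

theorem chiEval_add (χ : G →* Rˣ) (x y : MonoidAlgebra R G) :
    chiEval χ (x + y) = chiEval χ x + chiEval χ y := by
  unfold chiEval
  rw [MonoidAlgebra.coeff_add]
  exact Finsupp.sum_add_index' (by simp) (fun _ c d => add_mul c d _)

variable [Fintype G] [Invertible ((Fintype.card G : R))]

theorem single_mul_isotypicProj (χ : G →* Rˣ) (h : G) (c : R) :
    MonoidAlgebra.single h c * isotypicProj R G χ = (c * χ h) • isotypicProj R G χ := by
  unfold isotypicProj
  rw [mul_smul_comm, smul_comm (c * ((χ h : Rˣ) : R)) (⅟(Fintype.card G : R))]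
  congr 1
  rw [Finset.mul_sum, Finset.smul_sum]
  refine Fintype.sum_equiv (Equiv.mulLeft h) _ _ fun k => ?_
  have hχ : χ h * (χ (h * k))⁻¹ = (χ k)⁻¹ := by
    rw [map_mul, mul_inv, mul_inv_cancel_left]
  rw [MonoidAlgebra.single_mul_single, MonoidAlgebra.smul_single', Equiv.coe_mulLeft,
    mul_assoc, ← Units.val_mul, hχ]

theorem mul_isotypicProj (χ : G →* Rˣ) (a : MonoidAlgebra R G) :
    a * isotypicProj R G χ = chiEval χ a • isotypicProj R G χ := by
  induction a using MonoidAlgebra.induction_linear with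
  | zero => simp [chiEval]
  | add f g hf hg => rw [add_mul, hf, hg, chiEval_add, add_smul]
  | single h c => rw [single_mul_isotypicProj, chiEval_single]

theorem gAct_isotypicProj_gAct {M : Type*} [AddCommGroup M] [Module R M]
    (ρ : G →* Module.End R M) (χ : G →* Rˣ) (a : MonoidAlgebra R G) (x : M) :
    gAct R G ρ (isotypicProj R G χ) (gAct R G ρ a x)
      = chiEval χ a • gAct R G ρ (isotypicProj R G χ) x := by
  rw [← Module.End.mul_apply, ← map_mul, mul_comm, mul_isotypicProj, map_smul,
    LinearMap.smul_apply]

end GroupAlgebra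

section Cyclic

open Fin.NatCast

variable {R M : Type*} [CommRing R] [AddCommGroup M] [Module R M]

theorem pow_apply_of_apply_eq_smul_succ {r : ℕ} [NeZero r] (F : M →ₗ[R] M) (v : Fin r → M)
    (c : Fin r → R) (hF : ∀ i, F (v i) = c (i + 1) • v (i + 1)) (k : ℕ) (i : Fin r) :
    (F ^ k) (v i) = (∏ j ∈ Finset.range k, c (i + 1 + (j : Fin r))) • v (i + (k : Fin r)) := by
  induction k with
  | zero => simp
  | succ k ih =>
    rw [pow_succ', Module.End.mul_apply, ih, map_smul, hF, Finset.prod_range_succ, smul_smul]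
    congr 2
    · congr 1
      abel
    · rw [Nat.cast_succ, add_assoc]

theorem pow_card_apply_of_apply_eq_smul_succ {r : ℕ} [NeZero r] (F : M →ₗ[R] M)
    (v : Fin r → M) (c : Fin r → R) (hF : ∀ i, F (v i) = c (i + 1) • v (i + 1)) (i : Fin r) :
    (F ^ r) (v i) = (∏ j, c j) • v i := by
  rw [pow_apply_of_apply_eq_smul_succ F v c hF, Fin.natCast_self, add_zero,
    ← Fin.prod_univ_eq_prod_range (fun n => c (i + 1 + (n : Fin r)))]
  congr 1
  refine Fintype.prod_equiv (Equiv.addLeft (i + 1)) _ _ fun j => ?_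
  simp [Fin.cast_val_eq_self, add_assoc]

end Cyclic

section Pairing

variable {R M : Type*} [CommRing R] [AddCommGroup M] [Module R M]

theorem pairing_pow_apply_pow (B : M →ₗ[R] M →ₗ[R] R) (F : M →ₗ[R] M) (q : R) (d : ℕ)
    (hFB : ∀ x y, B (F x) (F y) = q ^ d * B x y) (k : ℕ) (x y : M) :
    B ((F ^ k) x) ((F ^ k) y) = q ^ (k * d) * B x y := by
  induction k generalizing x y with
  | zero => simp
  | succ k ih =>
    rw [pow_succ', Module.End.mul_apply, Module.End.mul_apply, hFB, ih, ← mul_assoc, ← pow_add,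
      Nat.succ_mul, add_comm d]

end Pairing

theorem sq_eq_of_pairing_eigenvectors {R M : Type*} [Field R] [AddCommGroup M] [Module R M]
    (B : M →ₗ[R] M →ₗ[R] R) (F : M →ₗ[R] M) (q : R) (d : ℕ)
    (hFB : ∀ x y, B (F x) (F y) = q ^ d * B x y) (r : ℕ) (μ : R) {x y : M}
    (hx : (F ^ r) x = μ • x) (hy : (F ^ r) y = μ • y) (hxy : B x y ≠ 0) :
    μ ^ 2 = q ^ (r * d) := by
  refine mul_right_cancel₀ hxy ?_
  calc μ ^ 2 * B x y = B ((F ^ r) x) ((F ^ r) y) := by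
        rw [hx, hy, map_smul, map_smul, LinearMap.smul_apply, smul_eq_mul, smul_eq_mul]
        ring
    _ = q ^ (r * d) * B x y := pairing_pow_apply_pow B F q d hFB r x y

theorem stmt_8_general (R M : Type*) [Field R] [AddCommGroup M] [Module R M]
    (G : Type*) [CommGroup G] [Fintype G] [Invertible ((Fintype.card G : R))]
    (σ : MulAut G) (ρ : G →* Module.End R M) (m : M)
    (F : M →ₗ[R] M) (a : MonoidAlgebra R G)
    (hFm : F m = gAct R G ρ a m)
    (hFπ : ∀ (χ : G →* Rˣ) (x : M),
      F (gAct R G ρ (isotypicProj R G χ) x)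
        = gAct R G ρ (isotypicProj R G (χ.comp σ⁻¹.toMonoidHom)) (F x))
    (q : R) (d : ℕ)
    (B : M →ₗ[R] M →ₗ[R] R)
    (hFB : ∀ x y : M, B (F x) (F y) = q ^ d * B x y)
    (r : ℕ) [NeZero r] (χ : Fin r → (G →* Rˣ))
    (horb : ∀ i : Fin r, χ (i + 1) = (χ i).comp σ⁻¹.toMonoidHom)
    (hclosed : ∀ i : Fin r, ∃ j : Fin r, (χ i)⁻¹ = χ j)
    (hnz : ∀ i : Fin r,
      B (gAct R G ρ (isotypicProj R G (χ i)) m)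
        (gAct R G ρ (isotypicProj R G ((χ i)⁻¹)) m) ≠ 0) :
    (∏ i : Fin r, chiEval (χ i) a) ^ 2 = q ^ (r * d) := by
  set v : Fin r → M := fun i => gAct R G ρ (isotypicProj R G (χ i)) m
  have hFv : ∀ i, F (v i) = chiEval (χ (i + 1)) a • v (i + 1) := fun i => by
    rw [hFπ, ← horb, hFm, gAct_isotypicProj_gAct]
  have heigen := pow_card_apply_of_apply_eq_smul_succ F v (fun i => chiEval (χ i) a) hFv
  obtain ⟨j, hj⟩ := hclosed 0
  have hpair : B (v 0) (v j) ≠ 0 := by simpa only [hj] using hnz 0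
  exact sq_eq_of_pairing_eigenvectors B F q d hFB r _ (heigen 0) (heigen j) hpair

/-- with a perfect `G`-invariant pairing into `R(-d)` satisfying
`⟨Fx, Fy⟩ = q^d ⟨x, y⟩`, if the `σ`-orbit `χ_1, …, χ_r` of characters appearing in `M`
is closed under inversion, then the eigenvalue `μ = ∏ χ_i(a)` of `F^r` satisfies `μ² = q^{rd}`. -/
theorem stmt_8 (R M : Type*) [Field R] [AddCommGroup M] [Module R M]
    (G : Type*) [CommGroup G] [Fintype G] [Invertible ((Fintype.card G : R))]
    (ζ : R) (hζ : IsPrimitiveRoot ζ (Fintype.card G))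
    (σ : MulAut G) (ρ : G →* Module.End R M) (m : M)
    (hgen : ∀ x : M, ∃ f : MonoidAlgebra R G, x = gAct R G ρ f m)
    (F : M →ₗ[R] M) (a : MonoidAlgebra R G)
    (hFm : F m = gAct R G ρ a m)
    (hFπ : ∀ (χ : G →* Rˣ) (x : M),
      F (gAct R G ρ (isotypicProj R G χ) x)
        = gAct R G ρ (isotypicProj R G (χ.comp σ⁻¹.toMonoidHom)) (F x))
    (q : R) (d : ℕ)
    (B : M →ₗ[R] M →ₗ[R] R) (hperf : Function.Bijective B)
    (hBG : ∀ (g : G) (x y : M), B (ρ g x) (ρ g y) = B x y)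
    (hFB : ∀ x y : M, B (F x) (F y) = q ^ d * B x y)
    (r : ℕ) [NeZero r] (χ : Fin r → (G →* Rˣ))
    (horb : ∀ i : Fin r, χ (i + 1) = (χ i).comp σ⁻¹.toMonoidHom)
    (happ : ∀ i : Fin r, gAct R G ρ (isotypicProj R G (χ i)) m ≠ 0)
    (hclosed : ∀ i : Fin r, ∃ j : Fin r, (χ i)⁻¹ = χ j)
    (hnz : ∀ i : Fin r,
      B (gAct R G ρ (isotypicProj R G (χ i)) m)
        (gAct R G ρ (isotypicProj R G ((χ i)⁻¹)) m) ≠ 0) :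
    (∏ i : Fin r, chiEval (χ i) a) ^ 2 = q ^ (r * d) :=
  stmt_8_general R M G σ ρ m F a hFm hFπ q d B hFB r χ horb hclosed hnz
end

section
/- With the hypotheses of the preceding statement but without assuming the orbit is closed under inversion, one has the identity ∏_{i=1}^r χ_i(a) · ∏_{i=1}^r χ_i^{-1}(a) = q^{rd}, i.e., the product of the F^r-eigenvalues on the χ-orbit and on the χ^{-1}-orbit equals q^{rd}. -/
/-!
`F` carries the `χ`-isotypic component `π_χ m` of the generator to the `χ ∘ σ⁻¹`-component of
`F m = a • m`, on which `a` acts by the scalar `(χ ∘ σ⁻¹)(a)`. Along the orbit this gives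
`F (π_{χ_i} m) = χ_{i+1}(a) π_{χ_{i+1}} m`, and likewise for the inverse orbit. Pairing the two and
using `B (F x) (F y) = q^d B x y` yields `χ_{i+1}(a) χ_{i+1}⁻¹(a) b_{i+1} = q^d b_i` with
`b_i = B (π_{χ_i} m) (π_{χ_i⁻¹} m) ≠ 0`; multiplying around the cyclic orbit, the `b_i` cancel.
-/

section IsotypicProj

variable {R : Type*} [CommRing R] {G : Type*} [CommGroup G] [Fintype G]
  [Invertible ((Fintype.card G : R))]

lemma isotypicProj_mul_single (χ : G →* Rˣ) (g : G) (c : R) :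
    isotypicProj R G χ * MonoidAlgebra.single g c
      = (c * ((χ g : Rˣ) : R)) • isotypicProj R G χ := by
  unfold isotypicProj
  rw [smul_mul_assoc, Finset.sum_mul, smul_comm]
  congr 1
  rw [Finset.smul_sum]
  refine Fintype.sum_equiv (Equiv.mulRight g) _ _ fun h => ?_
  rw [MonoidAlgebra.single_mul_single, Equiv.coe_mulRight, MonoidAlgebra.smul_single', map_mul,
    mul_inv, Units.val_mul]
  congr 1
  linear_combination (-(c * ((χ h)⁻¹ : Rˣ) : R)) * Units.mul_inv (χ g)

lemma isotypicProj_mul (χ : G →* Rˣ) (a : MonoidAlgebra R G) :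
    isotypicProj R G χ * a = chiEval χ a • isotypicProj R G χ := by
  conv_lhs => rw [← MonoidAlgebra.sum_coeff_single a]
  rw [Finsupp.sum, Finset.mul_sum, chiEval, Finsupp.sum, Finset.sum_smul]
  exact Finset.sum_congr rfl fun g _ => isotypicProj_mul_single χ g (a.coeff g)

lemma apply_isotypicProj_eq_smul {M : Type*} [AddCommGroup M] [Module R M]
    (σ : MulAut G) (ρ : G →* Module.End R M) (m : M) (F : M →ₗ[R] M) (a : MonoidAlgebra R G)
    (hFm : F m = gAct R G ρ a m)
    (hFπ : ∀ (χ : G →* Rˣ) (x : M),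
      F (gAct R G ρ (isotypicProj R G χ) x)
        = gAct R G ρ (isotypicProj R G (χ.comp σ⁻¹.toMonoidHom)) (F x))
    (χ : G →* Rˣ) :
    F (gAct R G ρ (isotypicProj R G χ) m)
      = chiEval (χ.comp σ⁻¹.toMonoidHom) a
          • gAct R G ρ (isotypicProj R G (χ.comp σ⁻¹.toMonoidHom)) m := by
  rw [hFπ, hFm, ← Module.End.mul_apply, ← map_mul, isotypicProj_mul, map_smul,
    LinearMap.smul_apply]

end IsotypicProj

lemma Fin.prod_eq_pow_of_mul_succ_eq {K : Type*} [CommMonoidWithZero K] [IsCancelMulZero K]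
    [Nontrivial K] {r : ℕ} [NeZero r]
    (c b : Fin r → K) (k : K) (hb : ∀ i, b i ≠ 0) (h : ∀ i, c (i + 1) * b (i + 1) = k * b i) :
    ∏ i, c i = k ^ r := by
  have hshift (f : Fin r → K) : ∏ i, f (i + 1) = ∏ i, f i :=
    Fintype.prod_equiv (Equiv.addRight 1) _ _ fun _ => rfl
  have hprod : (∏ i, c i) * ∏ i, b i = k ^ r * ∏ i, b i := by
    simpa only [Finset.prod_mul_distrib, hshift c, hshift b, Finset.prod_const,
      Finset.card_univ, Fintype.card_fin]
      using Finset.prod_congr (s₁ := Finset.univ) rfl fun i _ => h i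
  exact mul_right_cancel₀ (Finset.prod_ne_zero_iff.mpr fun i _ => hb i) hprod

theorem stmt_9_general (R M : Type*) [Field R] [AddCommGroup M] [Module R M]
    (G : Type*) [CommGroup G] [Fintype G] [Invertible ((Fintype.card G : R))]
    (σ : MulAut G) (ρ : G →* Module.End R M) (m : M)
    (F : M →ₗ[R] M) (a : MonoidAlgebra R G)
    (hFm : F m = gAct R G ρ a m)
    (hFπ : ∀ (χ : G →* Rˣ) (x : M),
      F (gAct R G ρ (isotypicProj R G χ) x)
        = gAct R G ρ (isotypicProj R G (χ.comp σ⁻¹.toMonoidHom)) (F x))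
    (q : R) (d : ℕ)
    (B : M →ₗ[R] M →ₗ[R] R)
    (hFB : ∀ x y : M, B (F x) (F y) = q ^ d * B x y)
    (r : ℕ) [NeZero r] (χ : Fin r → (G →* Rˣ))
    (horb : ∀ i : Fin r, χ (i + 1) = (χ i).comp σ⁻¹.toMonoidHom)
    (hnz : ∀ i : Fin r,
      B (gAct R G ρ (isotypicProj R G (χ i)) m)
        (gAct R G ρ (isotypicProj R G ((χ i)⁻¹)) m) ≠ 0) :
    (∏ i : Fin r, chiEval (χ i) a) * (∏ i : Fin r, chiEval ((χ i)⁻¹) a)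
      = q ^ (r * d) := by
  have hF := apply_isotypicProj_eq_smul σ ρ m F a hFm hFπ
  have hstep (i : Fin r) :
      chiEval (χ (i + 1)) a * chiEval (χ (i + 1))⁻¹ a
          * B (gAct R G ρ (isotypicProj R G (χ (i + 1))) m)
              (gAct R G ρ (isotypicProj R G (χ (i + 1))⁻¹) m)
        = q ^ d * B (gAct R G ρ (isotypicProj R G (χ i)) m)
              (gAct R G ρ (isotypicProj R G (χ i)⁻¹) m) := by
    rw [← hFB, hF, hF, MonoidHom.inv_comp, ← horb, map_smul, map_smul, LinearMap.smul_apply,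
      smul_eq_mul, smul_eq_mul, mul_left_comm, mul_assoc]
  rw [← Finset.prod_mul_distrib, pow_mul']
  exact Fin.prod_eq_pow_of_mul_succ_eq _ _ _ hnz hstep

/-- without assuming the orbit is closed under inversion, the product of the
`F^r`-eigenvalues on the `χ`-orbit and on the `χ⁻¹`-orbit equals `q^{rd}`:
`∏ χ_i(a) · ∏ χ_i⁻¹(a) = q^{rd}`. -/
theorem stmt_9 (R M : Type*) [Field R] [AddCommGroup M] [Module R M]
    (G : Type*) [CommGroup G] [Fintype G] [Invertible ((Fintype.card G : R))]
    (ζ : R) (hζ : IsPrimitiveRoot ζ (Fintype.card G))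
    (σ : MulAut G) (ρ : G →* Module.End R M) (m : M)
    (hgen : ∀ x : M, ∃ f : MonoidAlgebra R G, x = gAct R G ρ f m)
    (F : M →ₗ[R] M) (a : MonoidAlgebra R G)
    (hFm : F m = gAct R G ρ a m)
    (hFπ : ∀ (χ : G →* Rˣ) (x : M),
      F (gAct R G ρ (isotypicProj R G χ) x)
        = gAct R G ρ (isotypicProj R G (χ.comp σ⁻¹.toMonoidHom)) (F x))
    (q : R) (d : ℕ)
    (B : M →ₗ[R] M →ₗ[R] R) (hperf : Function.Bijective B)
    (hBG : ∀ (g : G) (x y : M), B (ρ g x) (ρ g y) = B x y)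
    (hFB : ∀ x y : M, B (F x) (F y) = q ^ d * B x y)
    (r : ℕ) [NeZero r] (χ : Fin r → (G →* Rˣ))
    (horb : ∀ i : Fin r, χ (i + 1) = (χ i).comp σ⁻¹.toMonoidHom)
    (happ : ∀ i : Fin r, gAct R G ρ (isotypicProj R G (χ i)) m ≠ 0)
    (hnz : ∀ i : Fin r,
      B (gAct R G ρ (isotypicProj R G (χ i)) m)
        (gAct R G ρ (isotypicProj R G ((χ i)⁻¹)) m) ≠ 0) :
    (∏ i : Fin r, chiEval (χ i) a) * (∏ i : Fin r, chiEval ((χ i)⁻¹) a)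
      = q ^ (r * d) :=
  stmt_9_general R M G σ ρ m F a hFm hFπ q d B hFB r χ horb hnz
end

section
/- Let W be a finite free module over the Witt ring R = W(F_p)-type base (here R = ℤ_p(μ_n) unramified), cyclic over R[G] with generator w, equipped with a σ_p-semilinear injective F with F(w) = a·w for a ∈ R[G], and a perfect pairing into R(-1) satisfying ⟨Fx, Fy⟩ = p·σ(⟨x,y⟩). Suppose χ_1, …, χ_r is a σ_p-orbit of characters appearing in W with χ_j ≠ χ_i^{-1} for all i, j, and all χ_i(a) have a common integer p-adic valuation α, all χ_i^{-1}(a) have common integer valuation β. Then α + β = 1, so exactly one of the two F^r-eigenvalues ∏χ_i(a), ∏χ_i^{-1}(a) is a p-adic unit; in particular not all eigenvalues of F^r have valuation r/2. -/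
/-!
Each `χ_i(a)` is associated to `p ^ α` and each `χ_i⁻¹(a)` to `p ^ β`, so the product identity
`∏ χ_i(a) · ∏ χ_i⁻¹(a) = p ^ r` becomes `p ^ ((α + β) r) ~ p ^ r`. Since `p` is a nonzero non-unit
its powers are pairwise non-associated, hence `(α + β) r = r` and `α + β = 1`. An element
associated to `p ^ (α r)` is a unit exactly when `α = 0`, so exactly one of the two products is a
unit.
-/

theorem Associated.isUnit_iff_of_pow {M : Type*} [Monoid M] {q x : M} (hq : ¬ IsUnit q) {n : ℕ}
    (h : Associated x (q ^ n)) : IsUnit x ↔ n = 0 := by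
  rw [h.isUnit_iff]
  rcases eq_or_ne n 0 with rfl | hn
  · simp
  · simp [isUnit_pow_iff hn, hq, hn]

theorem Associated.prod_pow_const {M ι : Type*} [CommMonoid M] {q : M} (s : Finset ι) (f : ι → M)
    (α : ℕ) (h : ∀ i ∈ s, Associated (f i) (q ^ α)) :
    Associated (∏ i ∈ s, f i) (q ^ (α * s.card)) := by
  simpa [Finset.prod_const, pow_mul] using Associated.prod s f (fun _ => q ^ α) h

section CancelMonoidWithZero

variable {M : Type*} [CommMonoidWithZero M] [IsCancelMulZero M] {q : M}

theorem Associated.pow_exponent_eq (hq0 : q ≠ 0) (hq : ¬ IsUnit q) {m n : ℕ}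
    (h : Associated (q ^ m) (q ^ n)) : m = n :=
  le_antisymm ((pow_dvd_pow_iff hq0 hq).mp h.dvd) ((pow_dvd_pow_iff hq0 hq).mp h.symm.dvd)

theorem add_eq_one_of_mul_eq_pow_of_associated (hq0 : q ≠ 0) (hq : ¬ IsUnit q)
    {x y : M} {α β r : ℕ} (hr : r ≠ 0) (hx : Associated x (q ^ (α * r)))
    (hy : Associated y (q ^ (β * r))) (hxy : x * y = q ^ r) : α + β = 1 := by
  have hpow : Associated (q ^ ((α + β) * r)) (q ^ (1 * r)) := by
    rw [add_mul, pow_add, one_mul, ← hxy]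
    exact (hx.mul_mul hy).symm
  exact Nat.eq_of_mul_eq_mul_right (Nat.pos_of_ne_zero hr) (hpow.pow_exponent_eq hq0 hq)

end CancelMonoidWithZero

theorem stmt_17_general (p : ℕ)
    (R : Type*) [CommRing R] [IsDomain R]
    (hirr : Irreducible (p : R))
    (G : Type*) [CommGroup G]
    (a : MonoidAlgebra R G)
    (r : ℕ) [NeZero r] (χ : Fin r → (G →* Rˣ))
    (hprod : (∏ i : Fin r, chiEval (χ i) a) * (∏ i : Fin r, chiEval ((χ i)⁻¹) a)
      = (p : R) ^ r)
    (α β : ℕ)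
    (hα : ∀ i : Fin r, Associated (chiEval (χ i) a) ((p : R) ^ α))
    (hβ : ∀ i : Fin r, Associated (chiEval ((χ i)⁻¹) a) ((p : R) ^ β)) :
    α + β = 1 ∧
      ((IsUnit (∏ i : Fin r, chiEval (χ i) a) ∧
          ¬ IsUnit (∏ i : Fin r, chiEval ((χ i)⁻¹) a)) ∨
        (¬ IsUnit (∏ i : Fin r, chiEval (χ i) a) ∧
          IsUnit (∏ i : Fin r, chiEval ((χ i)⁻¹) a))) := by
  have hr : r ≠ 0 := NeZero.ne r
  have hx := Associated.prod_pow_const Finset.univ _ α fun i _ => hα i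
  have hy := Associated.prod_pow_const Finset.univ _ β fun i _ => hβ i
  rw [Finset.card_univ, Fintype.card_fin] at hx hy
  have hab := add_eq_one_of_mul_eq_pow_of_associated hirr.ne_zero hirr.not_isUnit hr hx hy hprod
  rw [hx.isUnit_iff_of_pow hirr.not_isUnit, hy.isUnit_iff_of_pow hirr.not_isUnit,
    mul_eq_zero, mul_eq_zero]
  omega

/-- over an unramified `p`-adic base (a DVR in which `p` is irreducible,
`p ∤ |G|`), with `W` cyclic over `R[G]`, `F` semilinear injective with `F(w) = a·w` and a
perfect pairing into `R(-1)` giving `∏ χ_i(a) · ∏ χ_i⁻¹(a) = p^r`, if all `χ_i(a)` have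
common valuation `α` and all `χ_i⁻¹(a)` common valuation `β`, then `α + β = 1`; in
particular exactly one of the two `F^r`-eigenvalues is a `p`-adic unit. -/
theorem stmt_17 (p : ℕ) (hp : p.Prime)
    (R W : Type*) [CommRing R] [IsDomain R] [IsDiscreteValuationRing R]
    (hirr : Irreducible (p : R))
    [AddCommGroup W] [Module R W]
    (G : Type*) [CommGroup G] [Fintype G] [Invertible ((Fintype.card G : R))]
    (hpn : ¬ p ∣ Fintype.card G)
    (σ : MulAut G) (ρ : G →* Module.End R W) (w : W)
    (hgen : ∀ x : W, ∃ f : MonoidAlgebra R G, x = gAct R G ρ f w)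
    (F : W →ₗ[R] W) (hFinj : Function.Injective F) (a : MonoidAlgebra R G)
    (hFw : F w = gAct R G ρ a w)
    (hFπ : ∀ (χ : G →* Rˣ) (x : W),
      F (gAct R G ρ (isotypicProj R G χ) x)
        = gAct R G ρ (isotypicProj R G (χ.comp σ⁻¹.toMonoidHom)) (F x))
    (B : W →ₗ[R] W →ₗ[R] R) (hperf : Function.Bijective B)
    (hBG : ∀ (g : G) (x y : W), B (ρ g x) (ρ g y) = B x y)
    (hFB : ∀ x y : W, B (F x) (F y) = (p : R) * B x y)
    (r : ℕ) [NeZero r] (χ : Fin r → (G →* Rˣ))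
    (horb : ∀ i : Fin r, χ (i + 1) = (χ i).comp σ⁻¹.toMonoidHom)
    (happ : ∀ i : Fin r, gAct R G ρ (isotypicProj R G (χ i)) w ≠ 0)
    (hne : ∀ i j : Fin r, χ j ≠ (χ i)⁻¹)
    (hprod : (∏ i : Fin r, chiEval (χ i) a) * (∏ i : Fin r, chiEval ((χ i)⁻¹) a)
      = (p : R) ^ r)
    (α β : ℕ)
    (hα : ∀ i : Fin r, Associated (chiEval (χ i) a) ((p : R) ^ α))
    (hβ : ∀ i : Fin r, Associated (chiEval ((χ i)⁻¹) a) ((p : R) ^ β)) :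
    α + β = 1 ∧
      ((IsUnit (∏ i : Fin r, chiEval (χ i) a) ∧
          ¬ IsUnit (∏ i : Fin r, chiEval ((χ i)⁻¹) a)) ∨
        (¬ IsUnit (∏ i : Fin r, chiEval (χ i) a) ∧
          IsUnit (∏ i : Fin r, chiEval ((χ i)⁻¹) a))) :=
  stmt_17_general p R hirr G a r χ hprod α β hα hβ
end
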